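/- arXiv:1908.08129 — 3 statements merged into one kernel-verified Lean document; each statement's English description precedes it below -/
import Mathlib

section
/- Let G = (V, E) be a finite simple graph and k a natural number. Then G has an independent set of size at least k if and only if there exists a feasible pair (A, B) (A ⊆ V, B ⊆ E, and every edge of B has at most one endpoint in A) with |A| + |B| ≥ |E| + k. -/
/-- A finset of vertices is independent: no two of its vertices are adjacent. -/
def IsIndepSet {V : Type*} (G : SimpleGraph V) (A : Finset V) : Prop :=
  ∀ u ∈ A, ∀ v ∈ A, ¬ G.Adj u v

/-- The independence number of a finite graph. -/
noncomputable def indepNum {V : Type*} [Fintype V] (G : SimpleGraph V) : ℕ :=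
  sSup {k | ∃ A : Finset V, IsIndepSet G A ∧ A.card = k}

/-- A pair `(A, B)` with `A ⊆ V`, `B ⊆ E` is feasible if every edge in `B`
has at most one of its two endpoints in `A`. -/
def Feasible {V : Type*} (G : SimpleGraph V) (A : Finset V)
    (B : Finset (Sym2 V)) : Prop :=
  (∀ e ∈ B, e ∈ G.edgeSet) ∧ ∀ w z : V, s(w, z) ∈ B → ¬(w ∈ A ∧ z ∈ A)

/-- G has an independent set of size at least k iff there is a feasible pair
(A, B) with |A| + |B| ≥ |E| + k. -/
theorem stmt_1 {V : Type*} [Fintype V] (G : SimpleGraph V) (k : ℕ) :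
    (∃ A : Finset V, IsIndepSet G A ∧ k ≤ A.card) ↔
      ∃ (A : Finset V) (B : Finset (Sym2 V)),
        Feasible G A B ∧ G.edgeSet.ncard + k ≤ A.card + B.card := by
  classical
  have hfin : G.edgeSet.Finite := Set.toFinite _
  have hcardE : hfin.toFinset.card = G.edgeSet.ncard := by
    rw [Set.ncard_eq_toFinset_card']
    congr 1
    ext e
    simp only [Set.Finite.mem_toFinset, Set.mem_toFinset]
  constructor
  · rintro ⟨A, hA, hk⟩
    refine ⟨A, hfin.toFinset, ⟨?_, ?_⟩, ?_⟩
    · intro e he; simpa using (hfin.mem_toFinset.mp he)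
    · intro w z hwz ⟨hw, hz⟩
      have : G.Adj w z := by
        have := hfin.mem_toFinset.mp hwz
        simpa using this
      exact hA w hw z hz this
    · omega
  · rintro ⟨A, B, ⟨hBE, hfeas⟩, hcard⟩
    have hBsub : B ⊆ hfin.toFinset := fun e he => hfin.mem_toFinset.mpr (hBE e he)
    set del : Finset V := (hfin.toFinset \ B).image (fun e => e.out.1) with hdel
    refine ⟨A \ del, ?_, ?_⟩
    · intro u hu v hv hadj
      have hu' := Finset.mem_sdiff.mp hu
      have hv' := Finset.mem_sdiff.mp hv
      have heE : s(u, v) ∈ G.edgeSet := hadj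
      by_cases hB : s(u, v) ∈ B
      · exact hfeas u v hB ⟨hu'.1, hv'.1⟩
      · have hmem : s(u, v) ∈ hfin.toFinset \ B :=
          Finset.mem_sdiff.mpr ⟨hfin.mem_toFinset.mpr heE, hB⟩
        have hout : (s(u, v) : Sym2 V).out.1 ∈ del :=
          Finset.mem_image.mpr ⟨_, hmem, rfl⟩
        rcases Sym2.mem_iff.mp (Sym2.out_fst_mem s(u, v)) with h | h
        · exact hu'.2 (h ▸ hout)
        · exact hv'.2 (h ▸ hout)
    · have h1 : A.card - del.card ≤ (A \ del).card := Finset.le_card_sdiff _ _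
      have h2 : del.card ≤ (hfin.toFinset \ B).card := Finset.card_image_le
      have h3 : (hfin.toFinset \ B).card = hfin.toFinset.card - B.card :=
        Finset.card_sdiff_of_subset hBsub
      have h4 : B.card ≤ hfin.toFinset.card := Finset.card_le_card hBsub
      omega
end

section
/- (Caro–Wei) For every finite simple graph G = (V, E), the independence number satisfies α(G) ≥ Σ_{v ∈ V} 1/(d(v) + 1), where d(v) denotes the degree of v. -/
/-!
Greedy argument: pick a vertex `v` of minimum degree, put it into the independent set and delete
its closed neighbourhood `N[v]`. Every vertex of `N[v]` has degree at least `d(v)`, so `N[v]`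
carries total weight at most `(d(v) + 1) / (d(v) + 1) = 1`, while deleting vertices only lowers
degrees and so only raises the weights of the vertices that remain. Induction on the vertex set
finishes the proof.
-/

open Finset

namespace IsIndepSet

variable {V : Type*} {G : SimpleGraph V} {A : Finset V}

lemma insert [DecidableEq V] (hA : IsIndepSet G A) {v : V} (hv : ∀ w ∈ A, ¬ G.Adj v w) :
    IsIndepSet G (insert v A) := by
  intro x hx y hy hxy
  rw [mem_insert] at hx hy
  rcases hx with rfl | hx <;> rcases hy with rfl | hy
  · exact G.irrefl hxy
  · exact hv y hy hxy
  · exact hv x hx hxy.symm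
  · exact hA x hx y hy hxy

lemma card_le_indepNum [Fintype V] (hA : IsIndepSet G A) : #A ≤ indepNum G :=
  le_csSup ⟨Fintype.card V, by rintro k ⟨B, -, rfl⟩; exact B.card_le_univ⟩ ⟨A, hA, rfl⟩

end IsIndepSet

section CaroWei

variable {V : Type*} (G : SimpleGraph V) [DecidableRel G.Adj]

lemma one_div_card_adj_succ_le_of_subset {s t : Finset V} (hts : t ⊆ s) (u : V) :
    (1 : ℝ) / (#{w ∈ s | G.Adj u w} + 1) ≤ 1 / (#{w ∈ t | G.Adj u w} + 1) := by
  gcongr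

lemma sum_closedNeighborhood_le_one [DecidableEq V] {s : Finset V} {v : V} (hv : v ∈ s)
    (hmin : ∀ u ∈ s, #{w ∈ s | G.Adj v w} ≤ #{w ∈ s | G.Adj u w}) :
    ∑ u ∈ insert v {w ∈ s | G.Adj v w}, (1 : ℝ) / (#{w ∈ s | G.Adj u w} + 1) ≤ 1 := by
  set d := #{w ∈ s | G.Adj v w}
  have hN : insert v {w ∈ s | G.Adj v w} ⊆ s := insert_subset hv (filter_subset _ _)
  calc ∑ u ∈ insert v {w ∈ s | G.Adj v w}, (1 : ℝ) / (#{w ∈ s | G.Adj u w} + 1)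
      ≤ ∑ _u ∈ insert v {w ∈ s | G.Adj v w}, (1 : ℝ) / (d + 1) :=
        sum_le_sum fun u hu ↦ by gcongr; exact hmin u (hN hu)
    _ ≤ (d + 1) * (1 / (d + 1)) := by
        rw [sum_const, nsmul_eq_mul]
        gcongr
        exact_mod_cast card_insert_le _ _
    _ = 1 := by field_simp

theorem exists_isIndepSet_sum_le_card [DecidableEq V] (s : Finset V) :
    ∃ A ⊆ s, IsIndepSet G A ∧ ∑ u ∈ s, (1 : ℝ) / (#{w ∈ s | G.Adj u w} + 1) ≤ #A := by
  induction s using Finset.strongInduction with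
  | H s ih =>
  obtain rfl | hs := s.eq_empty_or_nonempty
  · exact ⟨∅, subset_rfl, by simp [IsIndepSet], by simp⟩
  obtain ⟨v, hv, hmin⟩ := exists_min_image s (fun u ↦ #{w ∈ s | G.Adj u w}) hs
  set N := insert v {w ∈ s | G.Adj v w}
  have hNs : N ⊆ s := insert_subset hv (filter_subset _ _)
  obtain ⟨A, hAt, hA, hsum⟩ := ih (s \ N) (sdiff_ssubset hNs ⟨v, mem_insert_self _ _⟩)
  have hvA : v ∉ A := fun h ↦ (mem_sdiff.1 (hAt h)).2 (mem_insert_self _ _)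
  refine ⟨insert v A, insert_subset hv (hAt.trans sdiff_subset), hA.insert fun w hw hvw ↦ ?_, ?_⟩
  · obtain ⟨hws, hwN⟩ := mem_sdiff.1 (hAt hw)
    exact hwN (mem_insert_of_mem (mem_filter.2 ⟨hws, hvw⟩))
  calc ∑ u ∈ s, (1 : ℝ) / (#{w ∈ s | G.Adj u w} + 1)
      = ∑ u ∈ N, (1 : ℝ) / (#{w ∈ s | G.Adj u w} + 1)
          + ∑ u ∈ s \ N, (1 : ℝ) / (#{w ∈ s | G.Adj u w} + 1) := by
        rw [add_comm, sum_sdiff hNs]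
    _ ≤ 1 + ∑ u ∈ s \ N, (1 : ℝ) / (#{w ∈ s \ N | G.Adj u w} + 1) :=
        add_le_add (sum_closedNeighborhood_le_one G hv hmin)
          (sum_le_sum fun u _ ↦ one_div_card_adj_succ_le_of_subset G sdiff_subset u)
    _ ≤ #(insert v A) := by
        rw [card_insert_of_notMem hvA]
        push_cast
        linarith

end CaroWei

/-- Caro–Wei: α(G) ≥ Σ_v 1/(d(v) + 1). -/
theorem stmt_4 {V : Type*} [Fintype V] (G : SimpleGraph V)
    [DecidableRel G.Adj] :
    (∑ v : V, (1 : ℝ) / (G.degree v + 1)) ≤ indepNum G := by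
  classical
  obtain ⟨A, -, hA, hsum⟩ := exists_isIndepSet_sum_le_card G univ
  calc ∑ v, (1 : ℝ) / (G.degree v + 1) = ∑ v, (1 : ℝ) / (#{w ∈ univ | G.Adj v w} + 1) := by
        simp only [← G.card_neighborFinset_eq_degree, G.neighborFinset_eq_filter]
    _ ≤ #A := hsum
    _ ≤ indepNum G := mod_cast hA.card_le_indepNum
end

section
/- Let V and E be finite sets and let 'endpoints' assign to each e ∈ E an unordered pair of elements of V (a graph G). Suppose for each vertex w there is a Boolean variable a_w and for each edge e = {w, z} a Boolean variable b_e, with the constraint b_e → ¬(a_w ∧ a_z) for every edge. Then the maximum number of true variables over all assignments satisfying all constraints equals |E| + α(G). -/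
/-- Propositional reformulation: over Boolean variables a_w (w ∈ V) and b_e
(e ∈ E) with constraints b_e → ¬(a_w ∧ a_z) for each edge e = {w,z}, the
maximum number of true variables equals |E| + α(G). -/
theorem stmt_13 {V E : Type*} [Fintype V] [Fintype E] [DecidableEq V]
    (ends : E → Sym2 V) (hloop : ∀ e : E, ¬ (ends e).IsDiag)
    (hinj : Function.Injective ends) :
    IsGreatest {k : ℕ | ∃ (a : V → Bool) (b : E → Bool),
        (∀ (e : E) (w z : V), ends e = s(w, z) → b e = true →
          ¬(a w = true ∧ a z = true)) ∧
        (Finset.univ.filter fun w => a w = true).card +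
          (Finset.univ.filter fun e => b e = true).card = k}
      (Fintype.card E +
        indepNum (SimpleGraph.fromRel fun u v => ∃ e : E, ends e = s(u, v))) := by
  classical
  set G := SimpleGraph.fromRel fun u v => ∃ e : E, ends e = s(u, v) with hG
  have hbdd : BddAbove {k | ∃ A : Finset V, IsIndepSet G A ∧ A.card = k} := by
    refine ⟨Fintype.card V, ?_⟩
    rintro k ⟨A, -, rfl⟩
    exact (Finset.card_le_univ A).trans_eq Finset.card_univ
  have hne : {k | ∃ A : Finset V, IsIndepSet G A ∧ A.card = k}.Nonempty :=
    ⟨0, ∅, by simp [IsIndepSet], rfl⟩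
  obtain ⟨A₀, hA₀, hcard⟩ : ∃ A : Finset V, IsIndepSet G A ∧ A.card = indepNum G :=
    Nat.sSup_mem hne hbdd
  -- endpoint chooser
  have hpair : ∀ e : E, ∃ p : V × V, ends e = s(p.1, p.2) := fun e =>
    (ends e).exists_rep.elim (fun p hp => ⟨p, by simp [← hp]⟩)
  choose p hp using hpair
  constructor
  · refine ⟨fun w => decide (w ∈ A₀), fun _ => true, ?_, ?_⟩
    · rintro e w z hez - ⟨hw, hz⟩
      simp only [decide_eq_true_eq] at hw hz
      have hwz : w ≠ z := by
        intro h; subst h; exact hloop e (hez ▸ Sym2.mk_isDiag_iff.mpr rfl)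
      exact hA₀ w hw z hz ((SimpleGraph.fromRel_adj _ w z).mpr ⟨hwz, Or.inl ⟨e, hez⟩⟩)
    · simp only [decide_eq_true_eq]
      rw [show (Finset.univ.filter fun w => w ∈ A₀) = A₀ by ext; simp]
      simp [hcard, Nat.add_comm]
  · rintro k ⟨a, b, hcon, rfl⟩
    set A : Finset V := Finset.univ.filter fun w => a w = true with hA
    set Bt : Finset E := Finset.univ.filter fun e => b e = true with hBt
    set F : Finset E := Finset.univ.filter fun e => (p e).1 ∈ A ∧ (p e).2 ∈ A with hF
    set A' : Finset V := A \ F.image (fun e => (p e).1) with hA'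
    -- A' is independent
    have hindep : IsIndepSet G A' := by
      intro u hu v hv hadj
      rw [hG, SimpleGraph.fromRel_adj] at hadj
      obtain ⟨hne', he⟩ := hadj
      have : ∃ e : E, ends e = s(u, v) := by
        rcases he with ⟨e, he⟩ | ⟨e, he⟩
        · exact ⟨e, he⟩
        · exact ⟨e, he.trans Sym2.eq_swap⟩
      obtain ⟨e, he⟩ := this
      have hpe : s((p e).1, (p e).2) = s(u, v) := (hp e).symm.trans he
      rw [Sym2.eq_iff] at hpe
      have huA : u ∈ A := (Finset.mem_sdiff.mp hu).1
      have hvA : v ∈ A := (Finset.mem_sdiff.mp hv).1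
      have heF : e ∈ F := by
        rw [hF, Finset.mem_filter]
        rcases hpe with ⟨h1, h2⟩ | ⟨h1, h2⟩ <;>
          exact ⟨Finset.mem_univ _, by rw [h1, h2]; exact ⟨by assumption, by assumption⟩⟩
      have himg : (p e).1 ∈ F.image (fun e => (p e).1) :=
        Finset.mem_image_of_mem _ heF
      rcases hpe with ⟨h1, -⟩ | ⟨h1, -⟩
      · exact (Finset.mem_sdiff.mp hu).2 (h1 ▸ himg)
      · exact (Finset.mem_sdiff.mp hv).2 (h1 ▸ himg)
    have hA'le : A'.card ≤ indepNum G := le_csSup hbdd ⟨A', hindep, rfl⟩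
    -- A.card ≤ A'.card + F.card
    have h1 : A.card ≤ A'.card + F.card := by
      have hsub : A ⊆ A' ∪ F.image (fun e => (p e).1) := by
        intro x hx
        by_cases hxi : x ∈ F.image (fun e => (p e).1)
        · exact Finset.mem_union_right _ hxi
        · exact Finset.mem_union_left _ (Finset.mem_sdiff.mpr ⟨hx, hxi⟩)
      calc A.card ≤ (A' ∪ F.image (fun e => (p e).1)).card := Finset.card_le_card hsub
        _ ≤ A'.card + (F.image (fun e => (p e).1)).card := Finset.card_union_le _ _
        _ ≤ A'.card + F.card := by gcongr; exact Finset.card_image_le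
    -- Bt.card + F.card ≤ card E
    have h2 : Bt.card + F.card ≤ Fintype.card E := by
      have hdisj : Disjoint Bt F := by
        rw [Finset.disjoint_left]
        intro e heB heF
        rw [hBt, Finset.mem_filter] at heB
        rw [hF, Finset.mem_filter, hA] at heF
        obtain ⟨-, h1', h2'⟩ := heF
        simp only [Finset.mem_filter, Finset.mem_univ, true_and] at h1' h2'
        exact hcon e (p e).1 (p e).2 (hp e) heB.2 ⟨h1', h2'⟩
      calc Bt.card + F.card = (Bt ∪ F).card := (Finset.card_union_of_disjoint hdisj).symm
        _ ≤ Fintype.card E := (Finset.card_le_univ _).trans_eq Finset.card_univ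
    calc A.card + Bt.card ≤ (A'.card + F.card) + Bt.card := by gcongr
      _ = A'.card + (Bt.card + F.card) := by ring
      _ ≤ indepNum G + Fintype.card E := by gcongr
      _ = Fintype.card E + indepNum G := Nat.add_comm _ _
end
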